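/- arXiv:0911.5589 — 3 statements merged into one kernel-verified Lean document; each statement's English description precedes it below -/
import Mathlib

section
/- Let G be a finite noncyclic group and Γ(G) its generating graph (vertices are the nonidentity elements of G, with x and y joined iff ⟨x,y⟩ = G). For nonidentity elements s, g ∈ G, the number of elements x in the conjugacy class of g with ⟨s,x⟩ = G, multiplied by |C_G(g)|, equals the number of elements y in the conjugacy class of s with ⟨g,y⟩ = G, multiplied by |C_G(s)|. That is, d(s, g^G)·|C_G(g)| = d(g, s^G)·|C_G(s)|. -/
/-! Orbit–stabilizer: as `a` runs over `G`, the conjugate `a * g * a⁻¹` runs over `g^G`, hitting each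
element exactly `|C_G(g)|` times. So both sides count the elements `a` with `⟨s, a g a⁻¹⟩ = G`,
respectively `⟨g, a s a⁻¹⟩ = G`, and conjugating by `a⁻¹` matches the two conditions via `a ↦ a⁻¹`. -/

open MulAction Subgroup

theorem MulAction.card_setOf_smul_mem {α X : Type*} [Group α] [MulAction α X] (b : X) (t : Set X) :
    Nat.card {a : α | a • b ∈ t} = Nat.card (stabilizer α b) * Nat.card ↥(orbit α b ∩ t) := by
  have hpre : {a : α | a • b ∈ t} = QuotientGroup.mk ⁻¹' (ofQuotientStabilizer α b ⁻¹' t) := rfl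
  have hrange : Set.range (ofQuotientStabilizer α b) = orbit α b :=
    ((QuotientGroup.mk_surjective (s := stabilizer α b)).range_comp (ofQuotientStabilizer α b)).symm
  rw [hpre, QuotientGroup.card_preimage_mk, ← Nat.card_image_of_injective
    (injective_ofQuotientStabilizer α b), Set.image_preimage_eq_inter_range, hrange, Set.inter_comm]

theorem ncard_isConj_mul_card_centralizer {G : Type*} [Group G] (g : G) (P : G → Prop) :
    {x : G | IsConj g x ∧ P x}.ncard * Nat.card (centralizer {g}) =
      Nat.card {a : G // P (a * g * a⁻¹)} := by
  have hcent : Nat.card (centralizer {g}) = Nat.card (stabilizer (ConjAct G) g) :=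
    Nat.card_congr (Equiv.subtypeEquiv ConjAct.toConjAct.toEquiv fun a => by
      simp [mem_centralizer_singleton_iff, ConjAct.smul_def, mul_inv_eq_iff_eq_mul])
  have hconj : Nat.card {a : G // P (a * g * a⁻¹)} = Nat.card {c : ConjAct G | c • g ∈ {x | P x}} :=
    Nat.card_congr (Equiv.subtypeEquiv ConjAct.toConjAct.toEquiv fun a => by simp [ConjAct.smul_def])
  have horbit : orbit (ConjAct G) g ∩ {x | P x} = {x : G | IsConj g x ∧ P x} := by
    ext x
    simp only [Set.mem_inter_iff, ConjAct.mem_orbit_conjAct, Set.mem_ofPred_eq, isConj_comm]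
  rw [hcent, hconj, MulAction.card_setOf_smul_mem, horbit, Nat.card_coe_set_eq, mul_comm]

theorem Subgroup.closure_image_mulEquiv_eq_top_iff {G H : Type*} [Group G] [Group H] (e : G ≃* H)
    (S : Set G) : closure (e '' S) = ⊤ ↔ closure S = ⊤ := by
  rw [← map_eq_top_iff e.mapSubgroup]
  simp [MulEquiv.mapSubgroup, MonoidHom.map_closure]

theorem Subgroup.closure_pair_conj_eq_top_iff {G : Type*} [Group G] (a x y : G) :
    closure {x, a * y * a⁻¹} = ⊤ ↔ closure {y, a⁻¹ * x * a⁻¹⁻¹} = ⊤ := by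
  rw [← closure_image_mulEquiv_eq_top_iff (MulAut.conj a⁻¹), Set.image_pair, Set.pair_comm]
  simp [mul_assoc]

theorem stmt_0_general {G : Type*} [Group G]
    (s g : G) :
    {x : G | IsConj g x ∧ Subgroup.closure {s, x} = ⊤}.ncard
        * Nat.card (Subgroup.centralizer {g}) =
      {y : G | IsConj s y ∧ Subgroup.closure {g, y} = ⊤}.ncard
        * Nat.card (Subgroup.centralizer {s}) := by
  rw [ncard_isConj_mul_card_centralizer, ncard_isConj_mul_card_centralizer]
  exact Nat.card_congr
    (Equiv.subtypeEquiv (Equiv.inv G) fun a => closure_pair_conj_eq_top_iff a s g)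

/-- `d(s, g^G) ⬝ |C_G(g)| = d(g, s^G) ⬝ |C_G(s)|`. -/
theorem stmt_0 {G : Type*} [Group G] [Finite G] (hG : ¬ IsCyclic G)
    (s g : G) (hs : s ≠ 1) (hg : g ≠ 1) :
    {x : G | IsConj g x ∧ Subgroup.closure {s, x} = ⊤}.ncard
        * Nat.card (Subgroup.centralizer {g}) =
      {y : G | IsConj s y ∧ Subgroup.closure {g, y} = ⊤}.ncard
        * Nat.card (Subgroup.centralizer {s}) :=
  stmt_0_general s g
end

section
/- Let Γ be a finite graph with m ≥ 3 vertices and vertex degrees d_1 ≤ d_2 ≤ ⋯ ≤ d_m. If d_k ≥ k+1 for all k with 1 ≤ k < m/2, then Γ contains a Hamiltonian cycle (Pósa's criterion). -/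
/-!
Pósa's condition in counting form says that for every `1 ≤ k < n/2` fewer than `k` vertices
have degree at most `k`; for sorted degrees this is `d_k ≥ k + 1`. The condition survives adding
edges, so a non-Hamiltonian Pósa graph lies below a maximal non-Hamiltonian one `H`, which is not
complete. Pick non-adjacent `u, v` of maximal degree sum, `deg u ≤ deg v`. Since `H + uv` is
Hamiltonian, `H` has a Hamiltonian path from `v` to `u`, and Ore's rotation argument gives
`deg u + deg v < n`. Every non-neighbour of `v` has degree at most `k := deg u`, so at least
`n - 1 - deg v ≥ k` vertices have degree at most `k`, while `2k < n`: a contradiction.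
-/

noncomputable def vertexDegree {V : Type*} (Γ : SimpleGraph V) (x : V) : ℕ :=
  (Γ.neighborSet x).ncard

namespace SimpleGraph

variable {V : Type*} {G H : SimpleGraph V}

namespace Walk

theorem isHamiltonianCycle_of_length_eq_card [Fintype V] [DecidableEq V] {a : V}
    {c : G.Walk a a} (hcard : 3 ≤ Fintype.card V) (hlen : c.length = Fintype.card V)
    (hmem : ∀ x, x ∈ c.support) : c.IsHamiltonianCycle := by
  have hnil : ¬c.Nil := fun h => by rw [h.length_eq_zero] at hlen; omega
  have hmem_tail : ∀ x, x ∈ c.support.tail := fun x => by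
    rcases c.cons_tail_support ▸ hmem x with _ | ⟨_, hx⟩
    · exact c.end_mem_tail_support hnil
    · exact hx
  -- a list of length `card V` containing every vertex has no repetitions
  have hnodup : c.support.tail.Nodup := by
    have huniv : (c.support.tail : Multiset V).toFinset = Finset.univ :=
      Finset.eq_univ_of_forall fun x => Multiset.mem_toFinset.2 (hmem_tail x)
    rw [← Multiset.coe_nodup, ← Multiset.toFinset_card_eq_card_iff_nodup, huniv, Finset.card_univ,
      Multiset.coe_card, List.length_tail, length_support, hlen, Nat.add_sub_cancel]
  rw [isHamiltonianCycle_iff_isCycle_and_length_eq, isCycle_iff_isPath_tail_and_le_length]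
  exact ⟨⟨IsPath.mk' (by rwa [support_tail_of_not_nil _ hnil]), hlen ▸ hcard⟩, hlen⟩

theorem IsCycle.eq_snd_or_eq_penultimate_of_mem_edges {u v : V} {c : G.Walk u u}
    (hc : c.IsCycle) (h : s(u, v) ∈ c.edges) : v = c.snd ∨ v = c.penultimate := by
  rw [← c.cons_tail_eq hc.not_nil, edges_cons, List.mem_cons] at h
  rcases h with h | h
  · exact Or.inl (Sym2.congr_right.1 h)
  · have htail : ¬c.tail.Nil := edges_eq_nil.not.mp (List.ne_nil_of_mem h)
    have hpen := penultimate_cons_of_not_nil (c.adj_snd hc.not_nil) c.tail htail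
    rw [c.cons_tail_eq hc.not_nil] at hpen
    exact Or.inr (hpen ▸ hc.isPath_tail.eq_penultimate_of_mem_edges h)

theorem IsHamiltonian.transfer [DecidableEq V] {u v : V} {p : G.Walk u v}
    (hp : p.IsHamiltonian) (hH : ∀ e ∈ p.edges, e ∈ H.edgeSet) :
    (p.transfer H hH).IsHamiltonian := by
  simpa [IsHamiltonian, support_transfer] using hp

theorem IsHamiltonian.ncard_setOf_getVert_mem [DecidableEq V] {u v : V} {p : G.Walk u v}
    (hp : p.IsHamiltonian) (s : Set V) :
    {j | j ≤ p.length ∧ p.getVert j ∈ s}.ncard = s.ncard := by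
  have himage : p.getVert '' {j | j ≤ p.length ∧ p.getVert j ∈ s} = s := by
    refine Set.Subset.antisymm (Set.image_subset_iff.2 fun j hj => hj.2) fun x hx => ?_
    obtain ⟨j, rfl⟩ := hp.getVert_surjective x
    refine ⟨min j p.length, ⟨min_le_right _ _, ?_⟩, ?_⟩ <;>
      rcases le_total j p.length with h | h <;> simp_all [getVert_of_length_le]
  conv_rhs => rw [← himage]
  exact ((hp.isPath.getVert_injOn.mono fun j hj => hj.1).ncard_image).symm

section

variable [Fintype V] [DecidableEq V]

theorem IsHamiltonianCycle.reverse {u : V} {c : G.Walk u u} (hc : c.IsHamiltonianCycle) :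
    c.reverse.IsHamiltonianCycle :=
  isHamiltonianCycle_iff_isCycle_and_length_eq.2
    ⟨hc.isCycle.reverse, by rw [length_reverse, hc.length_eq]⟩

theorem IsHamiltonianCycle.exists_isHamiltonian_of_mem_edges {u v : V} {c : G.Walk u u}
    (hc : c.IsHamiltonianCycle) (h : s(u, v) ∈ c.edges) :
    ∃ q : G.Walk v u, q.IsHamiltonian ∧ s(u, v) ∉ q.edges := by
  have of_snd : ∀ c : G.Walk u u, c.IsHamiltonianCycle → c.snd = v →
      ∃ q : G.Walk v u, q.IsHamiltonian ∧ s(u, v) ∉ q.edges := by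
    rintro c hc rfl
    refine ⟨c.tail, hc.isHamiltonian_tail, fun hmem => ?_⟩
    have hnodup := hc.isCycle.edges_nodup
    rw [← c.cons_tail_eq hc.isCycle.not_nil, edges_cons] at hnodup
    exact (List.nodup_cons.1 hnodup).1 hmem
  rcases hc.isCycle.eq_snd_or_eq_penultimate_of_mem_edges h with hv | hv
  · exact of_snd c hc hv.symm
  · exact of_snd c.reverse hc.reverse (by rw [snd_reverse, hv])

theorem IsHamiltonian.isHamiltonian_of_adj_getVert {u v : V} {p : G.Walk u v}
    (hp : p.IsHamiltonian) (hcard : 3 ≤ Fintype.card V) {i : ℕ} (hi : i < p.length)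
    (hu : G.Adj u (p.getVert (i + 1))) (hv : G.Adj (p.getVert i) v) : G.IsHamiltonian := by
  intro _
  -- the cycle `p_i → ⋯ → p_0 = u → p_{i+1} → ⋯ → v → p_i`
  refine ⟨_, ((p.take i).reverse.concat hu).append ((p.drop (i + 1)).concat hv.symm),
    isHamiltonianCycle_of_length_eq_card hcard ?_ fun x => ?_⟩
  · simp only [length_append, length_concat, length_reverse, take_length, drop_length]
    have := hp.length_eq
    omega
  · obtain ⟨j, rfl⟩ := hp.getVert_surjective x
    simp only [mem_support_append_iff, support_concat, support_reverse, List.mem_append,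
      List.mem_reverse, List.mem_singleton]
    by_cases hj : j ≤ i
    · left; left
      simpa [take_getVert, Nat.min_eq_right hj] using (p.take i).getVert_mem_support j
    · right; left
      simpa [drop_getVert, Nat.add_sub_cancel' (by omega : i + 1 ≤ j)] using
        (p.drop (i + 1)).getVert_mem_support (j - (i + 1))

theorem IsHamiltonian.vertexDegree_add_lt_card {u v : V} {p : G.Walk u v}
    (hp : p.IsHamiltonian) (hcard : 3 ≤ Fintype.card V) (hG : ¬G.IsHamiltonian) :
    vertexDegree G u + vertexDegree G v < Fintype.card V := by
  set A := {j | j ≤ p.length ∧ p.getVert j ∈ G.neighborSet u}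
  set B := {j | j ≤ p.length ∧ p.getVert j ∈ G.neighborSet v}
  have hA : A ⊆ Set.Icc 1 p.length := by
    rintro j ⟨hj, hadj⟩
    refine ⟨Nat.one_le_iff_ne_zero.2 ?_, hj⟩
    rintro rfl
    simp at hadj
  have hB : (· + 1) '' B ⊆ Set.Icc 1 p.length := by
    rintro _ ⟨j, ⟨hj, hadj⟩, rfl⟩
    refine ⟨Nat.le_add_left 1 j, Nat.succ_le_of_lt (lt_of_le_of_ne hj ?_)⟩
    rintro rfl
    simp at hadj
  have hdisj : Disjoint A ((· + 1) '' B) := by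
    refine Set.disjoint_left.2 ?_
    rintro _ ⟨hj, hu⟩ ⟨j, ⟨-, hv⟩, rfl⟩
    exact hG (hp.isHamiltonian_of_adj_getVert hcard hj hu (G.adj_symm hv))
  have hfin : (Set.Icc 1 p.length).Finite := Set.finite_Icc 1 p.length
  calc vertexDegree G u + vertexDegree G v = A.ncard + ((· + 1) '' B).ncard := by
        rw [(add_left_injective 1).injOn.ncard_image, hp.ncard_setOf_getVert_mem,
          hp.ncard_setOf_getVert_mem]
        rfl
    _ = (A ∪ (· + 1) '' B).ncard :=
        (Set.ncard_union_eq hdisj (hfin.subset hA) (hfin.subset hB)).symm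
    _ ≤ (Set.Icc 1 p.length).ncard := Set.ncard_le_ncard (Set.union_subset hA hB) hfin
    _ < Fintype.card V := by
        rw [Set.ncard_Icc_nat, hp.length_eq]
        omega

end

end Walk

theorem mem_edgeSet_of_mem_edges_sup_edge {u v a b : V} {p : (G ⊔ edge u v).Walk a b}
    (hp : s(u, v) ∉ p.edges) : ∀ e ∈ p.edges, e ∈ G.edgeSet := by
  intro e he
  have := p.edges_subset_edgeSet he
  rw [edgeSet_sup, Set.mem_union] at this
  refine this.resolve_right fun he' => hp ?_
  rw [edgeSet_edge, Set.mem_sdiff, Set.mem_singleton_iff] at he'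
  exact he'.1 ▸ he

theorem exists_isHamiltonian_walk_of_isHamiltonian_sup_edge [Fintype V] [DecidableEq V]
    {u v : V} (huv : u ≠ v) (hG : ¬G.IsHamiltonian) (hsup : (G ⊔ edge u v).IsHamiltonian) :
    ∃ p : G.Walk v u, p.IsHamiltonian := by
  have : Nontrivial V := ⟨u, v, huv⟩
  obtain ⟨c, hc⟩ := hsup.exists_isHamiltonianCycle u
  by_cases h : s(u, v) ∈ c.edges
  · obtain ⟨q, hq, hqe⟩ := hc.exists_isHamiltonian_of_mem_edges h
    exact ⟨_, hq.transfer (mem_edgeSet_of_mem_edges_sup_edge hqe)⟩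
  · refine absurd (fun _ => ⟨u, c.transfer G (mem_edgeSet_of_mem_edges_sup_edge h), ?_⟩) hG
    rw [Walk.isHamiltonianCycle_iff_isCycle_and_length_eq, Walk.length_transfer]
    exact ⟨hc.isCycle.transfer _, hc.length_eq⟩

theorem isHamiltonian_top [Fintype V] [DecidableEq V] (hcard : 3 ≤ Fintype.card V) :
    (⊤ : SimpleGraph V).IsHamiltonian := by
  intro _
  obtain ⟨n, hn⟩ := Nat.exists_eq_add_of_le' hcard
  let e : Fin (n + 3) ≃ V := (Fintype.equivFinOfCardEq hn).symm
  let f : cycleGraph (n + 3) →g (⊤ : SimpleGraph V) := ⟨e, fun h => e.injective.ne h.ne⟩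
  refine ⟨_, (cycleGraph.cycle n).map f, Walk.IsHamiltonianCycle.map e.bijective ?_⟩
  rw [Walk.isHamiltonianCycle_iff_isCycle_and_length_eq]
  simp [cycleGraph.isCycle_cycle, cycleGraph.length_cycle]

section Posa

variable [Fintype V]

theorem vertexDegree_mono (h : G ≤ H) (x : V) : vertexDegree G x ≤ vertexDegree H x :=
  Set.ncard_le_ncard (fun _ hy => h hy)

def PosaCondition (G : SimpleGraph V) : Prop :=
  ∀ k : ℕ, 1 ≤ k → 2 * k < Fintype.card V → {x | vertexDegree G x ≤ k}.ncard < k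

theorem PosaCondition.mono (h : G ≤ H) (hG : G.PosaCondition) : H.PosaCondition :=
  fun k hk₁ hk₂ => (Set.ncard_le_ncard fun x hx => (vertexDegree_mono h x).trans hx).trans_lt
    (hG k hk₁ hk₂)

theorem posaCondition_of_monotone (e : Fin (Fintype.card V) ≃ V)
    (hmono : Monotone fun i => vertexDegree G (e i))
    (h : ∀ i : Fin (Fintype.card V), 2 * (i + 1) < Fintype.card V → i + 2 ≤ vertexDegree G (e i)) :
    G.PosaCondition := by
  intro k hk₁ hk₂
  have himage : (fun x => (e.symm x : ℕ)) '' {x | vertexDegree G x ≤ k} ⊆ Set.Iio (k - 1) := by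
    rintro _ ⟨x, hx, rfl⟩
    by_contra hlt
    have hle := hmono (show (⟨k - 1, by omega⟩ : Fin _) ≤ e.symm x from not_lt.1 hlt)
    have hdeg : k - 1 + 2 ≤ vertexDegree G (e ⟨k - 1, _⟩) :=
      h ⟨k - 1, by omega⟩ (by simp only; omega)
    simp only [Equiv.apply_symm_apply] at hle
    simp only [Set.mem_ofPred_eq] at hx
    omega
  calc {x | vertexDegree G x ≤ k}.ncard
      = ((fun x => (e.symm x : ℕ)) '' {x | vertexDegree G x ≤ k}).ncard :=
        ((Fin.val_injective.comp e.symm.injective).injOn).ncard_image.symm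
    _ ≤ (Set.Iio (k - 1)).ncard := Set.ncard_le_ncard himage (Set.finite_Iio _)
    _ < k := by rw [Set.ncard_Iio_nat]; omega

theorem exists_not_adj_forall_vertexDegree_le (hG : G ≠ ⊤) :
    ∃ u v, u ≠ v ∧ ¬G.Adj u v ∧ vertexDegree G u ≤ vertexDegree G v ∧
      ∀ x, x ≠ v → ¬G.Adj x v → vertexDegree G x ≤ vertexDegree G u := by
  obtain ⟨a, b, hab, hadj⟩ := ne_top_iff_exists_not_adj.1 hG
  obtain ⟨⟨u, v⟩, ⟨huv, huv'⟩, hmax⟩ := Set.exists_max_image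
    {p : V × V | p.1 ≠ p.2 ∧ ¬G.Adj p.1 p.2} (fun p => vertexDegree G p.1 + vertexDegree G p.2)
    (Set.toFinite _) ⟨(a, b), hab, hadj⟩
  rcases le_total (vertexDegree G u) (vertexDegree G v) with hle | hle
  · refine ⟨u, v, huv, huv', hle, fun x hx hxv => ?_⟩
    have := hmax (x, v) ⟨hx, hxv⟩
    simp only at this
    omega
  · refine ⟨v, u, huv.symm, fun h => huv' h.symm, hle, fun x hx hxu => ?_⟩
    have := hmax (x, u) ⟨hx, hxu⟩
    simp only at this
    omega

theorem PosaCondition.card_le_vertexDegree_add (hP : G.PosaCondition)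
    (hcard : 3 ≤ Fintype.card V) {u v : V} (hle : vertexDegree G u ≤ vertexDegree G v)
    (hmax : ∀ x, x ≠ v → ¬G.Adj x v → vertexDegree G x ≤ vertexDegree G u) :
    Fintype.card V ≤ vertexDegree G u + vertexDegree G v := by
  by_contra! hlt
  set k := vertexDegree G u
  have hk : 1 ≤ k := by
    by_contra! hk
    have hu : u ∈ {x | vertexDegree G x ≤ 1} := by simp only [Set.mem_ofPred_eq]; omega
    have := (Set.ncard_pos (Set.toFinite _)).2 ⟨u, hu⟩
    have := hP 1 le_rfl (by omega)
    omega
  have hcompl : {x | x ≠ v ∧ ¬G.Adj x v} = (insert v (G.neighborSet v))ᶜ := by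
    ext x
    simp [G.adj_comm x v]
  have hcard_compl :
      {x | x ≠ v ∧ ¬G.Adj x v}.ncard = Fintype.card V - (vertexDegree G v + 1) := by
    have := Set.ncard_add_ncard_compl (insert v (G.neighborSet v))
    rw [Set.ncard_insert_of_notMem G.notMem_neighborSet_self, Nat.card_eq_fintype_card] at this
    rw [hcompl]
    unfold vertexDegree
    omega
  have hsub : {x | x ≠ v ∧ ¬G.Adj x v} ⊆ {x | vertexDegree G x ≤ k} :=
    fun x hx => hmax x hx.1 hx.2
  have := Set.ncard_le_ncard hsub
  have := hP k hk (by omega)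
  omega

theorem PosaCondition.isHamiltonian [DecidableEq V] (hcard : 3 ≤ Fintype.card V)
    (hP : G.PosaCondition) : G.IsHamiltonian := by
  by_contra hG
  obtain ⟨H, hGH, hH⟩ :=
    Finite.exists_le_maximal (p := fun H : SimpleGraph V => ¬H.IsHamiltonian) hG
  have hHtop : H ≠ ⊤ := fun h => hH.prop (h ▸ isHamiltonian_top hcard)
  obtain ⟨u, v, huv, hadj, hle, hmax⟩ := exists_not_adj_forall_vertexDegree_le hHtop
  have hsup : (H ⊔ edge u v).IsHamiltonian := by
    by_contra hsup
    exact hadj (hH.2 hsup le_sup_left (by simp [edge_adj, huv]))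
  obtain ⟨p, hp⟩ := exists_isHamiltonian_walk_of_isHamiltonian_sup_edge huv hH.prop hsup
  have := hp.vertexDegree_add_lt_card hcard hH.prop
  have := (hP.mono hGH).card_le_vertexDegree_add hcard hle hmax
  omega

end Posa

end SimpleGraph

/-- Pósa's criterion: if the degrees `d_1 ≤ ⋯ ≤ d_m` of a finite
graph on `m ≥ 3` vertices satisfy `d_k ≥ k + 1` for all `1 ≤ k < m/2`, then the
graph contains a Hamiltonian cycle. -/
theorem stmt_5 {V : Type*} [Fintype V] [DecidableEq V] (Γ : SimpleGraph V)
    (hm : 3 ≤ Fintype.card V)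
    (e : Fin (Fintype.card V) ≃ V)
    (hmono : Monotone fun i => vertexDegree Γ (e i))
    (h : ∀ k : ℕ, ∀ _ : 1 ≤ k, ∀ _ : 2 * k < Fintype.card V,
      vertexDegree Γ (e ⟨k - 1, by omega⟩) ≥ k + 1) :
    ∃ (v : V) (w : Γ.Walk v v), w.IsHamiltonianCycle := by
  have hP : Γ.PosaCondition :=
    SimpleGraph.posaCondition_of_monotone e hmono fun i hi => h (i + 1) (by omega) hi
  exact hP.isHamiltonian hm (by omega)
end

section
/- Let G be a nonsolvable finite group such that G/N is cyclic for every nontrivial normal subgroup N of G. Then G has a unique minimal normal subgroup, this socle Soc(G) is nonsolvable, and G embeds into Aut(Soc(G)). -/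
/-!
Let `N` be a minimal normal subgroup. Since `G ⧸ N` is cyclic, hence solvable, `N` is not
solvable; the same holds for every nontrivial normal subgroup. A second minimal normal subgroup
`M ≠ N` would meet `N` trivially and so embed into the solvable group `G ⧸ N`; hence `N` is the
unique minimal normal subgroup, i.e. the socle. The kernel of the conjugation action of `G` on `N`
is the centralizer of `N`; were it nontrivial it would contain `N`, making `N` abelian.
-/

/-- `N` is a minimal normal subgroup of `G`. -/
def IsMinimalNormalSubgroup {G : Type*} [Group G] (N : Subgroup G) : Prop :=
  N.Normal ∧ N ≠ ⊥ ∧ ∀ K : Subgroup G, K.Normal → K ≠ ⊥ → K ≤ N → K = N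

/-- The socle of `G`: the subgroup generated by all minimal normal subgroups. -/
def groupSocle (G : Type*) [Group G] : Subgroup G :=
  ⨆ N ∈ {N : Subgroup G | IsMinimalNormalSubgroup N}, N

section

variable {G : Type*} [Group G]

lemma IsMinimalNormalSubgroup.exists_le [Finite G] {K : Subgroup G} [hK : K.Normal]
    (hKbot : K ≠ ⊥) : ∃ N : Subgroup G, IsMinimalNormalSubgroup N ∧ N ≤ K := by
  obtain ⟨N, ⟨hN, hNbot, hNK⟩, hmin⟩ := wellFounded_lt.has_min
    {H : Subgroup G | H.Normal ∧ H ≠ ⊥ ∧ H ≤ K} ⟨K, hK, hKbot, le_rfl⟩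
  refine ⟨N, ⟨hN, hNbot, fun L hL hLbot hLN => ?_⟩, hNK⟩
  by_contra hne
  exact hmin L ⟨hL, hLbot, hLN.trans hNK⟩ (lt_of_le_of_ne hLN hne)

lemma IsMinimalNormalSubgroup.eq_of_inf_ne_bot {M N : Subgroup G}
    (hM : IsMinimalNormalSubgroup M) (hN : IsMinimalNormalSubgroup N) (h : M ⊓ N ≠ ⊥) :
    M = N := by
  have := hM.1
  have := hN.1
  rw [← hN.2.2 (M ⊓ N) inferInstance h inf_le_right, hM.2.2 (M ⊓ N) inferInstance h inf_le_left]

lemma groupSocle_eq_of_forall_eq {N : Subgroup G} (hN : IsMinimalNormalSubgroup N)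
    (huniq : ∀ M : Subgroup G, IsMinimalNormalSubgroup M → M = N) : groupSocle G = N :=
  le_antisymm (iSup₂_le fun M hM => (huniq M hM).le) (le_iSup₂_of_le N hN le_rfl)

lemma isSolvable_of_inf_eq_bot {M N : Subgroup G} [N.Normal] [Group.IsSolvable (G ⧸ N)]
    (h : M ⊓ N = ⊥) : Group.IsSolvable M := by
  refine Group.isSolvable_of_isSolvable_injective (f := (QuotientGroup.mk' N).comp M.subtype) ?_
  rw [← MonoidHom.ker_eq_bot_iff, ← MonoidHom.comap_ker, QuotientGroup.ker_mk']
  exact Subgroup.subgroupOf_eq_bot.2 (disjoint_iff.2 (inf_comm N M ▸ h))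

lemma not_isSolvable_of_isSolvable_quotient (hG : ¬ Group.IsSolvable G) (N : Subgroup G)
    [N.Normal] [Group.IsSolvable (G ⧸ N)] : ¬ Group.IsSolvable N :=
  fun hN => hG ((Group.isSolvable_iff_subgroup_quotient N).2 ⟨hN, inferInstance⟩)

lemma MulAut.ker_conjNormal (H : Subgroup G) [H.Normal] :
    (MulAut.conjNormal : G →* MulAut H).ker = Subgroup.centralizer H := by
  ext g
  simp only [MonoidHom.mem_ker, Subgroup.mem_centralizer_iff, MulEquiv.ext_iff,
    MulAut.one_apply, Subtype.ext_iff, MulAut.conjNormal_apply, Subtype.forall]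
  refine forall₂_congr fun h _ => ?_
  rw [mul_inv_eq_iff_eq_mul, eq_comm]

def HasSolvableProperQuotients (G : Type*) [Group G] : Prop :=
  ∀ (N : Subgroup G) [N.Normal], N ≠ ⊥ → Group.IsSolvable (G ⧸ N)

lemma HasSolvableProperQuotients.eq_of_isMinimalNormalSubgroup
    (hquot : HasSolvableProperQuotients G) (hG : ¬ Group.IsSolvable G) {M N : Subgroup G}
    (hM : IsMinimalNormalSubgroup M) (hN : IsMinimalNormalSubgroup N) : M = N := by
  refine hM.eq_of_inf_ne_bot hN fun h => ?_
  have := hM.1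
  have := hN.1
  have := hquot M hM.2.1
  have := hquot N hN.2.1
  exact not_isSolvable_of_isSolvable_quotient hG M (isSolvable_of_inf_eq_bot h)

lemma HasSolvableProperQuotients.centralizer_eq_bot [Finite G]
    (hquot : HasSolvableProperQuotients G) (hG : ¬ Group.IsSolvable G) {N : Subgroup G}
    (hN : IsMinimalNormalSubgroup N) : Subgroup.centralizer (N : Set G) = ⊥ := by
  have := hN.1
  by_contra hC
  obtain ⟨M, hM, hMC⟩ := IsMinimalNormalSubgroup.exists_le hC
  rw [hquot.eq_of_isMinimalNormalSubgroup hG hM hN,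
    Subgroup.le_centralizer_iff_isMulCommutative] at hMC
  have := hquot N hN.2.1
  exact not_isSolvable_of_isSolvable_quotient hG N (Group.isSolvable_of_comm hMC.is_comm.comm)

end

/-- a nonsolvable finite group all of whose quotients by nontrivial
normal subgroups are cyclic has a unique minimal normal subgroup, its socle is
nonsolvable, and it embeds into the automorphism group of its socle. -/
theorem stmt_8 {G : Type*} [Group G] [Finite G] (hns : ¬ IsSolvable G)
    (hcyc : ∀ (N : Subgroup G) [N.Normal], N ≠ ⊥ →
      IsCyclic (G ⧸ N)) :
    (∃! N : Subgroup G, IsMinimalNormalSubgroup N) ∧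
      ¬ IsSolvable (groupSocle G) ∧
      ∃ φ : G →* MulAut (groupSocle G), Function.Injective φ := by
  have hquot : HasSolvableProperQuotients G := fun N _ hN =>
    letI := (hcyc N hN).commGroup
    inferInstance
  obtain ⟨N, hN, -⟩ := IsMinimalNormalSubgroup.exists_le (K := ⊤) fun h =>
    hns (Group.isSolvable_of_top_eq_bot G h)
  have huniq M (hM : IsMinimalNormalSubgroup M) : M = N :=
    hquot.eq_of_isMinimalNormalSubgroup hns hM hN
  have := hN.1
  have := hquot N hN.2.1
  rw [groupSocle_eq_of_forall_eq hN huniq]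
  refine ⟨⟨N, hN, huniq⟩, not_isSolvable_of_isSolvable_quotient hns N, MulAut.conjNormal, ?_⟩
  rw [← MonoidHom.ker_eq_bot_iff, MulAut.ker_conjNormal, hquot.centralizer_eq_bot hns hN]
end
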